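/- Let F be an asymmetric norm on ℝⁿ whose closed unit ball {y : F(y) ≤ 1} is a strictly convex set, and suppose the function α ↦ F_*(α)² is differentiable on all of ℝⁿ. Then for all y, α ∈ ℝⁿ one has α ∈ ∂F²(y) if and only if y = (1/4)·∇(F_*²)(α), i.e. the multivalued map ∂F² is inverted by one quarter of the gradient of the squared dual norm. -/

import Mathlib

open scoped RealInnerProductSpace

/-- `ℝⁿ` with the Euclidean inner product. -/
abbrev En (n : ℕ) := EuclideanSpace ℝ (Fin n)

/-- An asymmetric norm on `ℝⁿ`. -/
def IsAsymNorm {n : ℕ} (F : En n → ℝ) : Prop :=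
  (∀ y, 0 ≤ F y) ∧ (∀ y, F y = 0 ↔ y = 0) ∧
  (∀ l : ℝ, 0 < l → ∀ y, F (l • y) = l * F y) ∧
  (∀ y₁ y₂, F (y₁ + y₂) ≤ F y₁ + F y₂)

/-- The dual asymmetric norm `F_*(α) = sup {⟨α, y⟩ : F y ≤ 1}`. -/
noncomputable def dualNorm {n : ℕ} (F : En n → ℝ) (α : En n) : ℝ :=
  sSup ((fun y => ⟪α, y⟫) '' {y | F y ≤ 1})

/-- The subdifferential of `F²` at `y`. -/
def subdiffSq {n : ℕ} (F : En n → ℝ) (y : En n) : Set (En n) :=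
  {α | ∀ z, (F y) ^ 2 + ⟪α, z - y⟫ ≤ (F z) ^ 2}

/-!
Both `α ∈ ∂F²(y)` and `4y ∈ ∂(F_*²)(α)` amount to the Fenchel–Young equality
`F(y)² + F_*(α)² / 4 = ⟨α, y⟩`: the conjugate of `F²` is `F_*² / 4`, and conversely `F²` is the
conjugate of `F_*² / 4`, which is where Hahn–Banach enters. As `F_*²` is convex and differentiable,
its gradient is its only subgradient, so `4y ∈ ∂(F_*²)(α)` means `4y = ∇(F_*²)(α)`.
-/

open Set

section Subgradient

variable {E : Type*} [NormedAddCommGroup E] [InnerProductSpace ℝ E] [CompleteSpace E]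
  {φ : E → ℝ} {x v G : E}

def IsSubgradient (φ : E → ℝ) (x v : E) : Prop :=
  ∀ z, φ x + ⟪v, z - x⟫ ≤ φ z

theorem IsSubgradient.eq_of_hasGradientAt (hv : IsSubgradient φ x v)
    (hG : HasGradientAt φ G x) : v = G := by
  have hmin : IsLocalMin (fun z => φ z - ⟪v, z⟫) x :=
    Filter.Eventually.of_forall fun z => by
      have := hv z
      rw [inner_sub_right] at this
      linarith
  have hderiv := (hasGradientAt_iff_hasFDerivAt.mp hG).sub (innerSL ℝ v).hasFDerivAt
  have hzero := congrArg (fun f => f (G - v)) (hmin.hasFDerivAt_eq_zero hderiv)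
  simp only [sub_apply, InnerProductSpace.toDual_apply_apply,
    innerSL_apply_apply, zero_apply, ← inner_sub_left] at hzero
  exact (sub_eq_zero.mp (inner_self_eq_zero.mp hzero)).symm

theorem ConvexOn.isSubgradient_of_hasGradientAt (hφ : ConvexOn ℝ univ φ)
    (hG : HasGradientAt φ G x) : IsSubgradient φ x G := by
  intro z
  have hline : HasDerivAt (φ ∘ AffineMap.lineMap x z) ⟪G, z - x⟫ (0 : ℝ) := by
    have hφ' :
        HasFDerivAt φ (InnerProductSpace.toDual ℝ E G) (AffineMap.lineMap x z (0 : ℝ)) := by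
      simpa using hasGradientAt_iff_hasFDerivAt.mp hG
    simpa using hφ'.comp_hasDerivAt (0 : ℝ) AffineMap.hasDerivAt_lineMap
  have := (hφ.comp_affineMap (AffineMap.lineMap x z)).le_slope_of_hasDerivAt
    (mem_univ 0) (mem_univ 1) zero_lt_one hline
  simp only [slope_def_field, Function.comp_apply, AffineMap.lineMap_apply_one,
    AffineMap.lineMap_apply_zero, sub_zero, div_one] at this
  linarith

end Subgradient

namespace IsAsymNorm

variable {n : ℕ} {F : En n → ℝ} {α y : En n}

theorem map_zero (hF : IsAsymNorm F) : F 0 = 0 := (hF.2.1 0).mpr rfl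

theorem map_smul_of_nonneg (hF : IsAsymNorm F) {t : ℝ} (ht : 0 ≤ t) (y : En n) :
    F (t • y) = t * F y := by
  rcases ht.eq_or_lt with rfl | ht
  · simp [hF.map_zero]
  · exact hF.2.2.1 t ht y

theorem convexOn (hF : IsAsymNorm F) : ConvexOn ℝ univ F :=
  ⟨convex_univ, fun a _ b _ p q hp hq _ => by
    simpa only [hF.map_smul_of_nonneg hp, hF.map_smul_of_nonneg hq, smul_eq_mul]
      using hF.2.2.2 (p • a) (q • b)⟩

theorem continuous (hF : IsAsymNorm F) : Continuous F :=
  continuousOn_univ.mp (hF.convexOn.continuousOn isOpen_univ)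

theorem exists_pos_mul_norm_le (hF : IsAsymNorm F) : ∃ m > 0, ∀ v : En n, m * ‖v‖ ≤ F v := by
  have hpos : ∀ u ∈ Metric.sphere (0 : En n) 1, 0 < F u := fun u hu =>
    (hF.1 u).lt_of_ne' fun h => by simp [(hF.2.1 u).mp h] at hu
  obtain ⟨m, hm, hmF⟩ :=
    (isCompact_sphere (0 : En n) 1).exists_forall_le' hF.continuous.continuousOn hpos
  refine ⟨m, hm, fun v => ?_⟩
  rcases eq_or_ne v 0 with rfl | hv
  · simp [hF.map_zero]
  have hnv : 0 < ‖v‖ := norm_pos_iff.mpr hv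
  have hunit : ‖v‖⁻¹ • v ∈ Metric.sphere (0 : En n) 1 := by
    simp [norm_smul, hnv.ne']
  have := hmF _ hunit
  rwa [hF.map_smul_of_nonneg (inv_nonneg.mpr hnv.le), le_inv_mul_iff₀ hnv, mul_comm] at this

theorem isCompact_unitBall (hF : IsAsymNorm F) : IsCompact {y : En n | F y ≤ 1} := by
  obtain ⟨m, hm, hmF⟩ := hF.exists_pos_mul_norm_le
  refine (isCompact_closedBall (0 : En n) (1 / m)).of_isClosed_subset
    (isClosed_le hF.continuous continuous_const) fun y (hy : F y ≤ 1) => ?_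
  rw [Metric.mem_closedBall, dist_zero_right, le_div_iff₀ hm, mul_comm]
  exact (hmF y).trans hy

theorem inner_le_dualNorm (hF : IsAsymNorm F) (hy : F y ≤ 1) : ⟪α, y⟫ ≤ dualNorm F α :=
  le_csSup (hF.isCompact_unitBall.bddAbove_image
    (continuous_const.inner (𝕜 := ℝ) continuous_id).continuousOn) ⟨y, hy, rfl⟩

theorem dualNorm_le (hF : IsAsymNorm F) {c : ℝ} (h : ∀ y, F y ≤ 1 → ⟪α, y⟫ ≤ c) :
    dualNorm F α ≤ c :=
  csSup_le ⟨⟪α, 0⟫, 0, by simp [hF.map_zero], rfl⟩ (forall_mem_image.mpr h)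

theorem exists_inner_eq_dualNorm (hF : IsAsymNorm F) (α : En n) :
    ∃ u, F u ≤ 1 ∧ ⟪α, u⟫ = dualNorm F α := by
  obtain ⟨u, hu, hmax⟩ := hF.isCompact_unitBall.exists_isMaxOn
    ⟨0, by simp [hF.map_zero]⟩ (continuous_const.inner (𝕜 := ℝ) continuous_id).continuousOn
  exact ⟨u, hu, le_antisymm (hF.inner_le_dualNorm hu) (hF.dualNorm_le hmax)⟩

theorem dualNorm_nonneg (hF : IsAsymNorm F) (α : En n) : 0 ≤ dualNorm F α := by
  simpa using hF.inner_le_dualNorm (α := α) (y := 0) (by simp [hF.map_zero])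

theorem dualNorm_zero (hF : IsAsymNorm F) : dualNorm F 0 = 0 :=
  le_antisymm (hF.dualNorm_le fun y _ => by simp) (hF.dualNorm_nonneg 0)

theorem dualNorm_smul_le (hF : IsAsymNorm F) {t : ℝ} (ht : 0 ≤ t) (α : En n) :
    dualNorm F (t • α) ≤ t * dualNorm F α :=
  hF.dualNorm_le fun y hy => by
    rw [real_inner_smul_left]
    exact mul_le_mul_of_nonneg_left (hF.inner_le_dualNorm hy) ht

theorem inner_le_dualNorm_mul (hF : IsAsymNorm F) (α y : En n) :
    ⟪α, y⟫ ≤ dualNorm F α * F y := by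
  rcases (hF.1 y).eq_or_lt with hy | hy
  · simp [(hF.2.1 y).mp hy.symm, hF.map_zero]
  have hunit : F ((F y)⁻¹ • y) ≤ 1 := by
    rw [hF.map_smul_of_nonneg (inv_nonneg.mpr hy.le), inv_mul_cancel₀ hy.ne']
  have := hF.inner_le_dualNorm (α := α) hunit
  rwa [real_inner_smul_right, inv_mul_le_iff₀ hy, mul_comm] at this

theorem inner_le_sq_add_sq_dualNorm_div_four (hF : IsAsymNorm F) (α y : En n) :
    ⟪α, y⟫ ≤ F y ^ 2 + dualNorm F α ^ 2 / 4 := by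
  nlinarith [hF.inner_le_dualNorm_mul α y, sq_nonneg (F y - dualNorm F α / 2)]

theorem convexOn_dualNorm (hF : IsAsymNorm F) : ConvexOn ℝ univ (dualNorm F) :=
  ⟨convex_univ, fun a _ b _ p q hp hq _ => hF.dualNorm_le fun y hy => by
    simp only [inner_add_left, real_inner_smul_left, smul_eq_mul]
    gcongr <;> exact hF.inner_le_dualNorm hy⟩

theorem convexOn_sq_dualNorm (hF : IsAsymNorm F) :
    ConvexOn ℝ univ fun β : En n => dualNorm F β ^ 2 :=
  hF.convexOn_dualNorm.pow (fun β _ => hF.dualNorm_nonneg β) 2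

theorem exists_dualNorm_le_one_one_lt_inner (hF : IsAsymNorm F) {p : En n} (hp : 1 < F p) :
    ∃ β, dualNorm F β ≤ 1 ∧ 1 < ⟪β, p⟫ := by
  have hconvex : Convex ℝ {y : En n | F y ≤ 1} := by simpa using hF.convexOn.convex_le 1
  obtain ⟨f, u, hfK, hfp⟩ := geometric_hahn_banach_closed_point hconvex
    (isClosed_le hF.continuous continuous_const) (not_le.mpr hp)
  have hu : 0 < u := by simpa using hfK 0 (by simp [hF.map_zero])
  refine ⟨u⁻¹ • (InnerProductSpace.toDual ℝ (En n)).symm f, hF.dualNorm_le fun y hy => ?_, ?_⟩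
  · rw [real_inner_smul_left, InnerProductSpace.toDual_symm_apply, inv_mul_le_one₀ hu]
    exact (hfK y hy).le
  · rwa [real_inner_smul_left, InnerProductSpace.toDual_symm_apply, one_lt_inv_mul₀ hu]

theorem le_of_forall_inner_le (hF : IsAsymNorm F) {b : ℝ}
    (h : ∀ β, dualNorm F β ≤ 1 → ⟪β, y⟫ ≤ b) : F y ≤ b := by
  have hb : 0 ≤ b := by simpa using h 0 (by rw [hF.dualNorm_zero]; exact zero_le_one)
  by_contra! hlt
  have hs : 0 < (b + F y) / 2 := by linarith
  obtain ⟨β, hβ, hβy⟩ := hF.exists_dualNorm_le_one_one_lt_inner (p := ((b + F y) / 2)⁻¹ • y)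
    (by rw [hF.map_smul_of_nonneg (inv_nonneg.mpr hs.le), one_lt_inv_mul₀ hs]; linarith)
  rw [real_inner_smul_right, one_lt_inv_mul₀ hs] at hβy
  linarith [h β hβ]

theorem sq_le_of_forall_inner_sub_le (hF : IsAsymNorm F) {a : ℝ}
    (h : ∀ β, ⟪β, y⟫ - dualNorm F β ^ 2 / 4 ≤ a) : F y ^ 2 ≤ a := by
  have ha : 0 ≤ a := by simpa [hF.dualNorm_zero] using h 0
  rw [← Real.le_sqrt (hF.1 y) ha]
  refine hF.le_of_forall_inner_le fun β hβ => ?_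
  by_contra! hlt
  have hx : 0 < ⟪β, y⟫ := (Real.sqrt_nonneg a).trans_lt hlt
  -- `t = 2⟪β, y⟫` maximizes `t ⟪β, y⟫ - t² / 4`.
  have hscaled := h ((2 * ⟪β, y⟫) • β)
  have hD : dualNorm F ((2 * ⟪β, y⟫) • β) ≤ 2 * ⟪β, y⟫ :=
    (hF.dualNorm_smul_le (by positivity) β).trans (mul_le_of_le_one_right (by positivity) hβ)
  rw [real_inner_smul_left] at hscaled
  have : ⟪β, y⟫ ^ 2 ≤ a := by
    nlinarith [pow_le_pow_left₀ (hF.dualNorm_nonneg _) hD 2]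
  exact hlt.not_ge (Real.le_sqrt_of_sq_le this)

theorem mem_subdiffSq_iff (hF : IsAsymNorm F) :
    α ∈ subdiffSq F y ↔ F y ^ 2 + dualNorm F α ^ 2 / 4 ≤ ⟪α, y⟫ := by
  constructor
  · intro h
    obtain ⟨u, hu, hαu⟩ := hF.exists_inner_eq_dualNorm α
    have hc := hF.dualNorm_nonneg α
    have hz := h ((dualNorm F α / 2) • u)
    rw [hF.map_smul_of_nonneg (by positivity), inner_sub_right, real_inner_smul_right, hαu] at hz
    have hFz : (dualNorm F α / 2 * F u) ^ 2 ≤ (dualNorm F α / 2) ^ 2 := by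
      rw [mul_pow]
      exact mul_le_of_le_one_right (by positivity) (pow_le_one₀ (hF.1 u) hu)
    linarith
  · intro h z
    rw [inner_sub_right]
    linarith [hF.inner_le_sq_add_sq_dualNorm_div_four α z]

theorem isSubgradient_sq_dualNorm_iff (hF : IsAsymNorm F) :
    IsSubgradient (fun β => dualNorm F β ^ 2) α ((4 : ℝ) • y) ↔
      F y ^ 2 + dualNorm F α ^ 2 / 4 ≤ ⟪α, y⟫ := by
  simp only [IsSubgradient, real_inner_smul_left, inner_sub_right]
  constructor
  · intro h
    have := hF.sq_le_of_forall_inner_sub_le (y := y) (a := ⟪α, y⟫ - dualNorm F α ^ 2 / 4)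
      fun β => by linarith [h β, real_inner_comm y β, real_inner_comm y α]
    linarith
  · intro h β
    linarith [hF.inner_le_sq_add_sq_dualNorm_div_four β y, real_inner_comm y β,
      real_inner_comm y α]

end IsAsymNorm

theorem subdiff_inverse_gradient_dual_general {n : ℕ} (F : En n → ℝ) (hF : IsAsymNorm F)
    (g : En n → En n)
    (hg : ∀ α, HasGradientAt (fun β => (dualNorm F β) ^ 2) (g α) α) :
    ∀ y α : En n, α ∈ subdiffSq F y ↔ y = (1 / 4 : ℝ) • g α := by
  intro y α
  rw [hF.mem_subdiffSq_iff, ← hF.isSubgradient_sq_dualNorm_iff]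
  constructor
  · intro h
    rw [← h.eq_of_hasGradientAt (hg α), smul_smul]
    norm_num
  · rintro rfl
    rw [smul_smul, show (4 : ℝ) * (1 / 4) = 1 by norm_num, one_smul]
    exact hF.convexOn_sq_dualNorm.isSubgradient_of_hasGradientAt (hg α)

/-- If the unit ball of `F` is strictly convex and `F_*²` is differentiable everywhere
with gradient `g`, then `∂F²` is inverted by `(1/4) ∇(F_*²)`:
`α ∈ ∂F²(y)` iff `y = (1/4) ∇(F_*²)(α)`. -/
theorem subdiff_inverse_gradient_dual {n : ℕ} (F : En n → ℝ) (hF : IsAsymNorm F)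
    (hconv : StrictConvex ℝ {y : En n | F y ≤ 1})
    (g : En n → En n)
    (hg : ∀ α, HasGradientAt (fun β => (dualNorm F β) ^ 2) (g α) α) :
    ∀ y α : En n, α ∈ subdiffSq F y ↔ y = (1 / 4 : ℝ) • g α :=
  subdiff_inverse_gradient_dual_general F hF g hg
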